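/- For n ≥ 2, let G_n be the group presented on abstract generators A_{t,s}, one for each pair of integers with n ≥ t > s ≥ 1, subject to the relations (1) A_{t,s} A_{r,q} = A_{r,q} A_{t,s} whenever (t − r)(t − q)(s − r)(s − q) > 0, and (2) A_{t,s} A_{s,r} = A_{t,r} A_{t,s} and A_{t,r} A_{t,s} = A_{s,r} A_{t,r} whenever n ≥ t > s > r ≥ 1. Then there is a group isomorphism from G_n to the braid group B_n sending each generator A_{t,s} to the band generator a_{t,s}. -/

import Mathlib

/-- Relations for the Artin presentation of the braid group `B n`.
Generators are indexed by `Fin (n-1)`, with index `i` representing `σ_{i+1}`. -/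
def braidRels (n : ℕ) : Set (FreeGroup (Fin (n - 1))) :=
  { r | (∃ i j : Fin (n - 1), (i : ℕ) + 2 ≤ (j : ℕ) ∧
          r = FreeGroup.of i * FreeGroup.of j * (FreeGroup.of i)⁻¹ * (FreeGroup.of j)⁻¹) ∨
        (∃ i j : Fin (n - 1), (j : ℕ) = (i : ℕ) + 1 ∧
          r = FreeGroup.of i * FreeGroup.of j * FreeGroup.of i *
              (FreeGroup.of j * FreeGroup.of i * FreeGroup.of j)⁻¹) }

/-- The braid group `B n` on `n` strands, as a presented group. -/
abbrev BraidGroup (n : ℕ) : Type := PresentedGroup (braidRels n)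

/-- The Artin generator `σ_i` of `B n`, for `1 ≤ i ≤ n - 1` (junk value `1` otherwise). -/
def braidGen (n i : ℕ) : BraidGroup n :=
  if h : i - 1 < n - 1 then PresentedGroup.of ⟨i - 1, h⟩ else 1

/-- The conjugating word `σ_{t-1} σ_{t-2} ⋯ σ_{s+1}` used to define band generators. -/
def bandConj (n t s : ℕ) : BraidGroup n :=
  ((List.range (t - 1 - s)).map (fun k => braidGen n (t - 1 - k))).prod

/-- The band generator `a_{t,s} = (σ_{t-1} ⋯ σ_{s+1}) σ_s (σ_{t-1} ⋯ σ_{s+1})⁻¹` of `B n`. -/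
def band (n t s : ℕ) : BraidGroup n :=
  bandConj n t s * braidGen n s * (bandConj n t s)⁻¹

/-- Index type for the band generators of `B n`: pairs `(t, s)` with `n ≥ t > s ≥ 1`. -/
abbrev BandIdx (n : ℕ) : Type := { p : ℕ × ℕ // p.1 ≤ n ∧ p.2 < p.1 ∧ 1 ≤ p.2 }

/-- The band-generator relations for the braid group, as relators in the free group on
the abstract generators `A_{t,s}`:
(1) `A_{t,s} A_{r,q} = A_{r,q} A_{t,s}` whenever `(t−r)(t−q)(s−r)(s−q) > 0`;
(2) `A_{t,s} A_{s,r} = A_{t,r} A_{t,s}` and `A_{t,r} A_{t,s} = A_{s,r} A_{t,r}`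
whenever `n ≥ t > s > r ≥ 1`. -/
def bandRels (n : ℕ) : Set (FreeGroup (BandIdx n)) :=
  { w | (∃ p q : BandIdx n,
          ((p.val.1 : ℤ) - q.val.1) * ((p.val.1 : ℤ) - q.val.2) *
            ((p.val.2 : ℤ) - q.val.1) * ((p.val.2 : ℤ) - q.val.2) > 0 ∧
          w = FreeGroup.of p * FreeGroup.of q * (FreeGroup.of q * FreeGroup.of p)⁻¹) ∨
        (∃ ts sr tr : BandIdx n,
          sr.val.1 = ts.val.2 ∧ tr.val.1 = ts.val.1 ∧ tr.val.2 = sr.val.2 ∧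
          (w = FreeGroup.of ts * FreeGroup.of sr * (FreeGroup.of tr * FreeGroup.of ts)⁻¹ ∨
           w = FreeGroup.of tr * FreeGroup.of ts * (FreeGroup.of sr * FreeGroup.of tr)⁻¹)) }

-- generic helpers
lemma pres_mk_rel {α : Type*} {rels : Set (FreeGroup α)} {r : FreeGroup α} (h : r ∈ rels) :
    PresentedGroup.mk rels r = 1 :=
  (QuotientGroup.eq_one_iff _).mpr (Subgroup.subset_normalClosure h)

lemma braid_aux1 {G : Type*} [Group G] {u v : G} (hb : v*u*v = u*v*u) :
    v⁻¹*u*v = u*v*u⁻¹ := by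
  calc v⁻¹*u*v = v⁻¹*(u*v*u)*u⁻¹ := by group
    _ = v⁻¹*(v*u*v)*u⁻¹ := by rw [hb]
    _ = u*v*u⁻¹ := by group

lemma braid_aux2 {G : Type*} [Group G] {u v : G} (hb : v*u*v = u*v*u) :
    v*u⁻¹*v⁻¹ = u⁻¹*v⁻¹*u := by
  calc v*u⁻¹*v⁻¹ = v*(u*v*u)⁻¹*u := by group
    _ = v*(v*u*v)⁻¹*u := by rw [hb]
    _ = u⁻¹*v⁻¹*u := by group

lemma braid_comm {n i j : ℕ} (hi : 1 ≤ i) (hij : i + 2 ≤ j) :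
    Commute (braidGen n i) (braidGen n j) := by
  unfold braidGen
  split_ifs with h1 h2 h2
  · have hmem : (FreeGroup.of (⟨i-1,h1⟩ : Fin (n-1)) * FreeGroup.of (⟨j-1,h2⟩ : Fin (n-1)) *
        (FreeGroup.of (⟨i-1,h1⟩ : Fin (n-1)))⁻¹ * (FreeGroup.of (⟨j-1,h2⟩ : Fin (n-1)))⁻¹)
        ∈ braidRels n :=
      Or.inl ⟨⟨i-1,h1⟩, ⟨j-1,h2⟩, by simp; omega, rfl⟩
    have h0 : (PresentedGroup.of (⟨i-1,h1⟩ : Fin (n-1)) : BraidGroup n) *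
        PresentedGroup.of ⟨j-1,h2⟩ * (PresentedGroup.of ⟨i-1,h1⟩)⁻¹ *
        (PresentedGroup.of ⟨j-1,h2⟩)⁻¹ = 1 := by
      have := pres_mk_rel hmem
      simpa [map_mul, map_inv, PresentedGroup.of] using this
    show _ * _ = _ * _
    calc PresentedGroup.of (⟨i-1,h1⟩ : Fin (n-1)) * PresentedGroup.of (⟨j-1,h2⟩ : Fin (n-1))
        = (PresentedGroup.of (⟨i-1,h1⟩ : Fin (n-1)) * PresentedGroup.of (⟨j-1,h2⟩ : Fin (n-1)) *
            (PresentedGroup.of (⟨i-1,h1⟩ : Fin (n-1)))⁻¹ * (PresentedGroup.of (⟨j-1,h2⟩ : Fin (n-1)))⁻¹) *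
          (PresentedGroup.of (⟨j-1,h2⟩ : Fin (n-1)) * PresentedGroup.of (⟨i-1,h1⟩ : Fin (n-1))) := by group
      _ = _ := by rw [h0]; group
  · exact Commute.one_right _
  · exact Commute.one_left _
  · exact Commute.one_left _

lemma braid_braid {n i : ℕ} (hi : 1 ≤ i) (hin : i + 2 ≤ n) :
    braidGen n i * braidGen n (i+1) * braidGen n i
      = braidGen n (i+1) * braidGen n i * braidGen n (i+1) := by
  have hA : i - 1 < n - 1 := by omega
  have hB : i + 1 - 1 < n - 1 := by omega
  simp only [braidGen, dif_pos hA, dif_pos hB]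
  set a := (PresentedGroup.of (⟨i-1,hA⟩ : Fin (n-1)) : BraidGroup n) with ha
  set b := (PresentedGroup.of (⟨i+1-1,hB⟩ : Fin (n-1)) : BraidGroup n) with hbdef
  have hmem : (FreeGroup.of (⟨i-1,hA⟩ : Fin (n-1)) * FreeGroup.of (⟨i+1-1,hB⟩ : Fin (n-1)) *
      FreeGroup.of (⟨i-1,hA⟩ : Fin (n-1)) *
      (FreeGroup.of (⟨i+1-1,hB⟩ : Fin (n-1)) * FreeGroup.of (⟨i-1,hA⟩ : Fin (n-1)) *
        FreeGroup.of (⟨i+1-1,hB⟩ : Fin (n-1)))⁻¹) ∈ braidRels n :=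
    Or.inr ⟨⟨i-1,hA⟩, ⟨i+1-1,hB⟩, by simp; omega, rfl⟩
  have h0 : a * b * a * (b * a * b)⁻¹ = 1 := by
    have := pres_mk_rel hmem
    simpa [map_mul, map_inv, ha, hbdef, PresentedGroup.of] using this
  calc a * b * a = (a * b * a * (b * a * b)⁻¹) * (b * a * b) := by group
    _ = b * a * b := by rw [h0]; group

lemma bandConj_eq_one {n t s : ℕ} (h : t ≤ s + 1) : bandConj n t s = 1 := by
  unfold bandConj
  rw [show t - 1 - s = 0 by omega]
  simp

lemma bandConj_succ {n t s : ℕ} (h : s + 2 ≤ t) :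
    bandConj n t s = braidGen n (t-1) * bandConj n (t-1) s := by
  unfold bandConj
  rw [show t - 1 - s = (t - 1 - 1 - s) + 1 by omega, List.range_succ_eq_map,
    List.map_cons, List.prod_cons, List.map_map]
  have h1 : List.map ((fun k => braidGen n (t - 1 - k)) ∘ Nat.succ) (List.range (t - 1 - 1 - s))
      = List.map (fun k => braidGen n (t - 1 - 1 - k)) (List.range (t - 1 - 1 - s)) :=
    List.map_congr_left fun a _ => by
      simp only [Function.comp_apply]
      congr 1
      omega
  rw [h1]
  rfl

lemma band_base (n s : ℕ) : band n (s+1) s = braidGen n s := by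
  unfold band
  rw [bandConj_eq_one (le_refl _)]
  group

lemma band_rec {n t s : ℕ} (h : s + 2 ≤ t) :
    band n t s = braidGen n (t-1) * band n (t-1) s * (braidGen n (t-1))⁻¹ := by
  unfold band
  rw [bandConj_succ h]
  group

lemma comm_gen_band_far {n k r q : ℕ} (hq : 1 ≤ q) (hk : 1 ≤ k) (hqr : q < r)
    (h : k + 2 ≤ q ∨ r + 1 ≤ k) : Commute (braidGen n k) (band n r q) := by
  induction r, hqr using Nat.le_induction with
  | base =>
    rw [band_base]
    rcases h with h | h
    · exact braid_comm hk h
    · exact (braid_comm hq (by omega)).symm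
  | succ r hr ih =>
    rw [band_rec (by omega), show r + 1 - 1 = r by omega]
    have hgen : Commute (braidGen n k) (braidGen n r) := by
      rcases h with h | h
      · exact braid_comm hk (by omega)
      · exact (braid_comm (by omega) (by omega)).symm
    have hband : Commute (braidGen n k) (band n r q) := ih (by omega)
    exact (hgen.mul_right hband).mul_right hgen.inv_right

lemma comm_gen_band_inner {n k t s : ℕ} (hs : 1 ≤ s) (h1 : s + 1 ≤ k) (h2 : k + 2 ≤ t)
    (htn : t ≤ n) : Commute (braidGen n k) (band n t s) := by
  induction t, h2 using Nat.le_induction with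
  | base =>
    -- t = k+2 : base computation
    have e1 : band n (k+2) s
        = braidGen n (k+1) * band n (k+1) s * (braidGen n (k+1))⁻¹ := by
      rw [band_rec (by omega)]; norm_num
    have e2 : band n (k+1) s = braidGen n k * band n k s * (braidGen n k)⁻¹ := by
      rcases Nat.eq_or_lt_of_le h1 with h | h
      · rw [← h, band_base, show s + 1 = s + 1 from rfl]
        rw [band_rec (by omega)]
        norm_num [← h, band_base]
      · rw [band_rec (by omega)]; norm_num
    set u := braidGen n (k+1) with hu
    set v := braidGen n k with hv
    set X := band n k s with hX
    have hb : v * u * v = u * v * u := braid_braid (by omega) (by omega)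
    have hXu : Commute u X := comm_gen_band_far hs (by omega) (by omega) (Or.inr (le_refl _))
    have hc2 : u * v⁻¹ * u⁻¹ = v⁻¹ * u⁻¹ * v := braid_aux2 hb.symm
    show v * _ = _ * v
    rw [e1, e2]
    calc v*(u*(v*X*v⁻¹)*u⁻¹)
        = (v*u*v)*X*v⁻¹*u⁻¹ := by group
      _ = (u*v*u)*X*v⁻¹*u⁻¹ := by rw [hb]
      _ = u*v*(u*X)*v⁻¹*u⁻¹ := by group
      _ = u*v*(X*u)*v⁻¹*u⁻¹ := by rw [hXu.eq]
      _ = u*v*X*(u*v⁻¹*u⁻¹) := by group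
      _ = u*v*X*(v⁻¹*u⁻¹*v) := by rw [hc2]
      _ = (u*(v*X*v⁻¹)*u⁻¹)*v := by group
  | succ t ht ih =>
    rw [band_rec (show s + 2 ≤ t + 1 by omega), show t + 1 - 1 = t by omega]
    have hgen : Commute (braidGen n k) (braidGen n t) := braid_comm (by omega) (by omega)
    have hband : Commute (braidGen n k) (band n t s) := ih (by omega)
    exact (hgen.mul_right hband).mul_right hgen.inv_right

lemma comm_band {n r q : ℕ} (W : BraidGroup n) (hq : 1 ≤ q) (hqr : q < r)
    (h : ∀ k, q ≤ k → k < r → Commute (braidGen n k) W) : Commute (band n r q) W := by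
  induction r, hqr using Nat.le_induction with
  | base =>
    rw [band_base]; exact h q (le_refl _) (by omega)
  | succ r hr ih =>
    rw [band_rec (by omega), show r + 1 - 1 = r by omega]
    have hgen : Commute (braidGen n r) W := h r (by omega) (by omega)
    have hband : Commute (band n r q) W := ih (fun k hk1 hk2 => h k hk1 (by omega))
    exact (hgen.mul_left hband).mul_left hgen.inv_left

lemma braid_gen_band {n m r : ℕ} (hr : 1 ≤ r) (hrm : r < m) (hm : m + 1 ≤ n) :
    braidGen n m * band n m r * braidGen n m
      = band n m r * braidGen n m * band n m r := by
  induction m, hrm using Nat.le_induction with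
  | base =>
    rw [band_base]
    exact (braid_braid hr (by omega)).symm
  | succ m hm' ih =>
    rw [band_rec (by omega), show m + 1 - 1 = m by omega]
    set u := braidGen n (m+1) with hu
    set v := braidGen n m with hv
    set X := band n m r with hX
    have hb : v * u * v = u * v * u := braid_braid (by omega) (by omega)
    have hXu : Commute u X := comm_gen_band_far hr (by omega) (by omega) (Or.inr (le_refl _))
    have ihe : v * X * v = X * v * X := ih (by omega)
    have hc1 : v⁻¹*u*v = u*v*u⁻¹ := braid_aux1 hb
    have hc2 : v*u⁻¹*v⁻¹ = u⁻¹*v⁻¹*u := braid_aux2 hb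
    have hXui : u⁻¹ * X = X * u⁻¹ := hXu.inv_left.eq
    calc u*(v*X*v⁻¹)*u
        = u*v*X*v⁻¹*u := by group
      _ = u*v*(u*X*u⁻¹)*v⁻¹*u := by rw [hXu.eq]; group
      _ = (u*v*u)*X*(u⁻¹*v⁻¹*u) := by group
      _ = (v*u*v)*X*(v*u⁻¹*v⁻¹) := by rw [hb, hc2]
      _ = v*u*(v*X*v)*u⁻¹*v⁻¹ := by group
      _ = v*u*(X*v*X)*u⁻¹*v⁻¹ := by rw [ihe]
      _ = v*(u*X)*v*(X*u⁻¹)*v⁻¹ := by group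
      _ = v*(X*u)*v*(u⁻¹*X)*v⁻¹ := by rw [hXu.eq, hXui]
      _ = v*X*(u*v*u⁻¹)*X*v⁻¹ := by group
      _ = v*X*(v⁻¹*u*v)*X*v⁻¹ := by rw [hc1]
      _ = (v*X*v⁻¹)*u*(v*X*v⁻¹) := by group

lemma merge1 {n t s r : ℕ} (hr : 1 ≤ r) (hrs : r < s) (hst : s < t) :
    band n t s * band n s r = band n t r * band n t s := by
  induction t, hst using Nat.le_induction with
  | base =>
    rw [band_base, band_rec (show r + 2 ≤ s + 1 by omega), show s + 1 - 1 = s by omega]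
    group
  | succ t ht ih =>
    rw [band_rec (show s + 2 ≤ t + 1 by omega), band_rec (show r + 2 ≤ t + 1 by omega),
      show t + 1 - 1 = t by omega]
    have hcomm : Commute (braidGen n t) (band n s r) :=
      comm_gen_band_far hr (by omega) hrs (Or.inr (by omega))
    calc braidGen n t * band n t s * (braidGen n t)⁻¹ * band n s r
        = braidGen n t * band n t s * ((braidGen n t)⁻¹ * band n s r) := by group
      _ = braidGen n t * band n t s * (band n s r * (braidGen n t)⁻¹) := by
          rw [hcomm.inv_left.eq]
      _ = braidGen n t * (band n t s * band n s r) * (braidGen n t)⁻¹ := by group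
      _ = braidGen n t * (band n t r * band n t s) * (braidGen n t)⁻¹ := by rw [ih]
      _ = braidGen n t * band n t r * (braidGen n t)⁻¹ *
            (braidGen n t * band n t s * (braidGen n t)⁻¹) := by group

lemma merge2 {n t s r : ℕ} (hr : 1 ≤ r) (hrs : r < s) (hst : s < t) (htn : t ≤ n) :
    band n t r * band n t s = band n s r * band n t r := by
  induction t, hst using Nat.le_induction with
  | base =>
    rw [band_base, band_rec (show r + 2 ≤ s + 1 by omega), show s + 1 - 1 = s by omega]
    have hb : braidGen n s * band n s r * braidGen n s
        = band n s r * braidGen n s * band n s r := braid_gen_band hr hrs htn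
    calc braidGen n s * band n s r * (braidGen n s)⁻¹ * braidGen n s
        = braidGen n s * band n s r := by group
      _ = (braidGen n s * band n s r * braidGen n s) * (braidGen n s)⁻¹ := by group
      _ = (band n s r * braidGen n s * band n s r) * (braidGen n s)⁻¹ := by rw [hb]
      _ = band n s r * (braidGen n s * band n s r * (braidGen n s)⁻¹) := by group
  | succ t ht ih =>
    rw [band_rec (show s + 2 ≤ t + 1 by omega), band_rec (show r + 2 ≤ t + 1 by omega),
      show t + 1 - 1 = t by omega]
    have hcomm : Commute (braidGen n t) (band n s r) :=
      comm_gen_band_far hr (by omega) hrs (Or.inr (by omega))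
    calc braidGen n t * band n t r * (braidGen n t)⁻¹ *
          (braidGen n t * band n t s * (braidGen n t)⁻¹)
        = braidGen n t * (band n t r * band n t s) * (braidGen n t)⁻¹ := by group
      _ = braidGen n t * (band n s r * band n t r) * (braidGen n t)⁻¹ := by
          rw [ih (by omega)]
      _ = (braidGen n t * band n s r) * (band n t r * (braidGen n t)⁻¹) := by group
      _ = (band n s r * braidGen n t) * (band n t r * (braidGen n t)⁻¹) := by rw [hcomm.eq]
      _ = band n s r * (braidGen n t * band n t r * (braidGen n t)⁻¹) := by group

lemma sign_cases {t s r q : ℕ} (hts : s < t) (hrq : q < r)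
    (hpos : ((t:ℤ) - r) * ((t:ℤ) - q) * ((s:ℤ) - r) * ((s:ℤ) - q) > 0) :
    r < s ∨ t < q ∨ (s < q ∧ r < t) ∨ (q < s ∧ t < r) := by
  by_contra hcon
  push_neg at hcon
  obtain ⟨h1, h2, h3, h4⟩ := hcon
  -- s ≤ r, q ≤ t;  s<q → t ≤ r ;  q<s → r ≤ t (after push_neg forms)
  have hne1 : (t:ℤ) - r ≠ 0 := by intro h; rw [h] at hpos; simp at hpos
  have hne2 : (t:ℤ) - q ≠ 0 := by
    intro h; rw [h] at hpos; simp at hpos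
  have hne3 : (s:ℤ) - r ≠ 0 := by
    intro h; rw [h] at hpos; simp at hpos
  have hne4 : (s:ℤ) - q ≠ 0 := by intro h; rw [h] at hpos; simp at hpos
  have htr : t ≠ r := by intro h; apply hne1; omega
  have htq : t ≠ q := by intro h; apply hne2; omega
  have hsr : s ≠ r := by intro h; apply hne3; omega
  have hsq : s ≠ q := by intro h; apply hne4; omega
  rcases lt_or_gt_of_ne hsq with h5 | h5
  · have h6 := h3 h5
    -- s < q < t < r
    have a1 : (t:ℤ) - r < 0 := by omega
    have a2 : (t:ℤ) - q > 0 := by omega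
    have a3 : (s:ℤ) - r < 0 := by omega
    have a4 : (s:ℤ) - q < 0 := by omega
    have P1 : ((t:ℤ) - r) * ((t:ℤ) - q) < 0 := mul_neg_of_neg_of_pos a1 a2
    have P2 : ((s:ℤ) - r) * ((s:ℤ) - q) > 0 := mul_pos_of_neg_of_neg a3 a4
    nlinarith [mul_neg_of_neg_of_pos P1 P2]
  · have h6 := h4 h5
    -- q < s < r < t
    have a1 : (t:ℤ) - r > 0 := by omega
    have a2 : (t:ℤ) - q > 0 := by omega
    have a3 : (s:ℤ) - r < 0 := by omega
    have a4 : (s:ℤ) - q > 0 := by omega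
    have P1 : ((t:ℤ) - r) * ((t:ℤ) - q) > 0 := mul_pos a1 a2
    have P2 : ((s:ℤ) - r) * ((s:ℤ) - q) < 0 := mul_neg_of_neg_of_pos a3 a4
    nlinarith [mul_neg_of_pos_of_neg P1 P2]


lemma comm_band_band {n t s r q : ℕ} (hs : 1 ≤ s) (hst : s < t) (htn : t ≤ n)
    (hq : 1 ≤ q) (hqr : q < r) (hrn : r ≤ n)
    (hpos : ((t:ℤ) - r) * ((t:ℤ) - q) * ((s:ℤ) - r) * ((s:ℤ) - q) > 0) :
    Commute (band n t s) (band n r q) := by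
  rcases sign_cases hst hqr hpos with h | h | ⟨h1, h2⟩ | ⟨h1, h2⟩
  · exact (comm_band (band n t s) hq hqr fun k hk1 hk2 =>
      comm_gen_band_far hs (by omega) hst (Or.inl (by omega))).symm
  · exact comm_band (band n r q) hs hst fun k hk1 hk2 =>
      comm_gen_band_far hq (by omega) hqr (Or.inl (by omega))
  · exact (comm_band (band n t s) hq hqr fun k hk1 hk2 =>
      comm_gen_band_inner hs (by omega) (by omega) htn).symm
  · exact comm_band (band n r q) hs hst fun k hk1 hk2 =>
      comm_gen_band_inner hq (by omega) (by omega) hrn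

def bandImg (n : ℕ) : BandIdx n → BraidGroup n := fun p => band n p.val.1 p.val.2

lemma bandRels_hold (n : ℕ) : ∀ w ∈ bandRels n, FreeGroup.lift (bandImg n) w = 1 := by
  rintro w (⟨p, q, hpos, rfl⟩ | ⟨ts, sr, tr, h1, h2, h3, (rfl | rfl)⟩)
  · obtain ⟨⟨t, s⟩, htn, hst, hs⟩ := p
    obtain ⟨⟨r, q'⟩, hrn, hqr, hq⟩ := q
    simp only [map_mul, map_inv, FreeGroup.lift_apply_of, bandImg] at *
    have hc : Commute (band n t s) (band n r q') :=
      comm_band_band hs hst htn hq hqr hrn hpos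
    rw [hc.eq]
    group
  · obtain ⟨⟨t, s⟩, htn, hst, hs⟩ := ts
    obtain ⟨⟨s', r⟩, hsn, hrs, hr⟩ := sr
    obtain ⟨⟨t', r'⟩, htn', hrt, hr'⟩ := tr
    simp only at h1 h2 h3
    subst h1; subst h2; subst h3
    simp only [map_mul, map_inv, FreeGroup.lift_apply_of, bandImg]
    rw [merge1 hr hrs hst]
    group
  · obtain ⟨⟨t, s⟩, htn, hst, hs⟩ := ts
    obtain ⟨⟨s', r⟩, hsn, hrs, hr⟩ := sr
    obtain ⟨⟨t', r'⟩, htn', hrt, hr'⟩ := tr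
    simp only at h1 h2 h3
    subst h1; subst h2; subst h3
    simp only [map_mul, map_inv, FreeGroup.lift_apply_of, bandImg]
    rw [merge2 hr hrs hst htn]
    group

def toBraid (n : ℕ) : PresentedGroup (bandRels n) →* BraidGroup n :=
  PresentedGroup.toGroup (bandRels_hold n)

def genIdx (n : ℕ) (j : Fin (n-1)) : BandIdx n :=
  ⟨(j.val + 2, j.val + 1), by
    refine ⟨?_, by omega, by omega⟩
    have := j.isLt
    omega⟩

def genImg (n : ℕ) : Fin (n-1) → PresentedGroup (bandRels n) := fun j =>
  PresentedGroup.of (genIdx n j)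

lemma bandG_comm {n : ℕ} (p q : BandIdx n)
    (hpos : ((p.val.1 : ℤ) - q.val.1) * ((p.val.1 : ℤ) - q.val.2) *
      ((p.val.2 : ℤ) - q.val.1) * ((p.val.2 : ℤ) - q.val.2) > 0) :
    (PresentedGroup.of p : PresentedGroup (bandRels n)) * PresentedGroup.of q
      = PresentedGroup.of q * PresentedGroup.of p := by
  have hmem : (FreeGroup.of p * FreeGroup.of q * (FreeGroup.of q * FreeGroup.of p)⁻¹)
      ∈ bandRels n := Or.inl ⟨p, q, hpos, rfl⟩
  have h0 : (PresentedGroup.of p : PresentedGroup (bandRels n)) * PresentedGroup.of q *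
      (PresentedGroup.of q * PresentedGroup.of p)⁻¹ = 1 := by
    have := pres_mk_rel hmem
    simpa [map_mul, map_inv, PresentedGroup.of] using this
  exact mul_inv_eq_one.mp h0

lemma bandG_merge1 {n : ℕ} (ts sr tr : BandIdx n)
    (h1 : sr.val.1 = ts.val.2) (h2 : tr.val.1 = ts.val.1) (h3 : tr.val.2 = sr.val.2) :
    (PresentedGroup.of ts : PresentedGroup (bandRels n)) * PresentedGroup.of sr
      = PresentedGroup.of tr * PresentedGroup.of ts := by
  have hmem : (FreeGroup.of ts * FreeGroup.of sr * (FreeGroup.of tr * FreeGroup.of ts)⁻¹)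
      ∈ bandRels n := Or.inr ⟨ts, sr, tr, h1, h2, h3, Or.inl rfl⟩
  have h0 : (PresentedGroup.of ts : PresentedGroup (bandRels n)) * PresentedGroup.of sr *
      (PresentedGroup.of tr * PresentedGroup.of ts)⁻¹ = 1 := by
    have := pres_mk_rel hmem
    simpa [map_mul, map_inv, PresentedGroup.of] using this
  exact mul_inv_eq_one.mp h0

lemma bandG_merge2 {n : ℕ} (ts sr tr : BandIdx n)
    (h1 : sr.val.1 = ts.val.2) (h2 : tr.val.1 = ts.val.1) (h3 : tr.val.2 = sr.val.2) :
    (PresentedGroup.of tr : PresentedGroup (bandRels n)) * PresentedGroup.of ts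
      = PresentedGroup.of sr * PresentedGroup.of tr := by
  have hmem : (FreeGroup.of tr * FreeGroup.of ts * (FreeGroup.of sr * FreeGroup.of tr)⁻¹)
      ∈ bandRels n := Or.inr ⟨ts, sr, tr, h1, h2, h3, Or.inr rfl⟩
  have h0 : (PresentedGroup.of tr : PresentedGroup (bandRels n)) * PresentedGroup.of ts *
      (PresentedGroup.of sr * PresentedGroup.of tr)⁻¹ = 1 := by
    have := pres_mk_rel hmem
    simpa [map_mul, map_inv, PresentedGroup.of] using this
  exact mul_inv_eq_one.mp h0

lemma bandG_braidrel {n : ℕ} (ts sr tr : BandIdx n)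
    (h1 : sr.val.1 = ts.val.2) (h2 : tr.val.1 = ts.val.1) (h3 : tr.val.2 = sr.val.2) :
    (PresentedGroup.of ts : PresentedGroup (bandRels n)) * PresentedGroup.of sr *
        PresentedGroup.of ts
      = PresentedGroup.of sr * PresentedGroup.of ts * PresentedGroup.of sr := by
  have e1 := bandG_merge1 ts sr tr h1 h2 h3
  have e2 := bandG_merge2 ts sr tr h1 h2 h3
  calc PresentedGroup.of ts * PresentedGroup.of sr * PresentedGroup.of ts
      = (PresentedGroup.of sr * PresentedGroup.of tr) * PresentedGroup.of ts := by
        rw [e1.trans e2]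
    _ = PresentedGroup.of sr * (PresentedGroup.of tr * PresentedGroup.of ts) := by group
    _ = PresentedGroup.of sr * (PresentedGroup.of ts * PresentedGroup.of sr) := by rw [← e1]
    _ = PresentedGroup.of sr * PresentedGroup.of ts * PresentedGroup.of sr := by group

lemma braidRels_hold (n : ℕ) : ∀ r ∈ braidRels n, FreeGroup.lift (genImg n) r = 1 := by
  rintro r (⟨i, j, hij, rfl⟩ | ⟨i, j, hij, rfl⟩)
  · simp only [map_mul, map_inv, FreeGroup.lift_apply_of, genImg]
    have hc := bandG_comm (genIdx n i) (genIdx n j) (by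
      simp only [genIdx]
      have hd : (i.val : ℤ) + 2 ≤ (j.val : ℤ) := by exact_mod_cast hij
      push_cast
      nlinarith [mul_pos (mul_pos (mul_pos
        (show (0:ℤ) < (j.val : ℤ) - i.val by omega)
        (show (0:ℤ) < (j.val : ℤ) - i.val - 1 by omega))
        (show (0:ℤ) < (j.val : ℤ) - i.val + 1 by omega))
        (show (0:ℤ) < (j.val : ℤ) - i.val by omega)])
    rw [hc]
    group
  · have hlt : i.val + 1 < n - 1 := by have := j.isLt; omega
    simp only [map_mul, map_inv, FreeGroup.lift_apply_of, genImg]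
    have key := bandG_braidrel (genIdx n j) (genIdx n i)
      ⟨(j.val + 2, i.val + 1), by
        refine ⟨?_, by omega, by omega⟩
        have := j.isLt
        omega⟩
      (by simp [genIdx]; omega) rfl rfl
    exact mul_inv_eq_one.mpr key.symm

def toBand (n : ℕ) : BraidGroup n →* PresentedGroup (bandRels n) :=
  PresentedGroup.toGroup (braidRels_hold n)

lemma comp1 (n : ℕ) : (toBraid n).comp (toBand n) = MonoidHom.id (BraidGroup n) := by
  apply PresentedGroup.ext
  intro j
  show toBraid n (toBand n (PresentedGroup.of j)) = PresentedGroup.of j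
  rw [show toBand n (PresentedGroup.of j) = genImg n j from PresentedGroup.toGroup.of _]
  show toBraid n (PresentedGroup.of (genIdx n j)) = _
  rw [show toBraid n (PresentedGroup.of (genIdx n j)) = bandImg n (genIdx n j) from
    PresentedGroup.toGroup.of _]
  show band n (j.val + 1 + 1) (j.val + 1) = _
  rw [band_base]
  have hr : j.val + 1 - 1 < n - 1 := by simpa using j.isLt
  simp only [braidGen, dif_pos hr]
  have hfin : (⟨j.val + 1 - 1, hr⟩ : Fin (n-1)) = j := Fin.ext (by simp)
  rw [hfin]

lemma toBand_band {n s : ℕ} (hs : 1 ≤ s) : ∀ t (hst : s < t) (htn : t ≤ n),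
    toBand n (band n t s) = PresentedGroup.of (⟨(t, s), htn, hst, hs⟩ : BandIdx n) := by
  intro t hst
  induction t, hst using Nat.le_induction with
  | base =>
    intro htn
    rw [band_base]
    have hr : s - 1 < n - 1 := by omega
    simp only [braidGen, dif_pos hr]
    rw [show toBand n (PresentedGroup.of ⟨s-1,hr⟩) = genImg n ⟨s-1,hr⟩ from
      PresentedGroup.toGroup.of _]
    show PresentedGroup.of (genIdx n ⟨s-1,hr⟩) = _
    congr 1
    apply Subtype.ext
    simp only [genIdx]
    rw [Prod.ext_iff]
    constructor <;> simp <;> omega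
  | succ t ht ih =>
    intro htn
    rw [band_rec (by omega), show t + 1 - 1 = t by omega]
    have hr : t - 1 < n - 1 := by omega
    rw [map_mul, map_mul, map_inv]
    have hgen : toBand n (braidGen n t)
        = PresentedGroup.of (⟨(t+1, t), by omega, by omega, by omega⟩ : BandIdx n) := by
      simp only [braidGen, dif_pos hr]
      rw [show toBand n (PresentedGroup.of ⟨t-1,hr⟩) = genImg n ⟨t-1,hr⟩ from
        PresentedGroup.toGroup.of _]
      show PresentedGroup.of (genIdx n ⟨t-1,hr⟩) = _
      congr 1
      apply Subtype.ext
      simp only [genIdx]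
      rw [Prod.ext_iff]
      constructor <;> simp <;> omega
    rw [hgen, ih (by omega)]
    have e := bandG_merge1 (⟨(t+1, t), by omega, by omega, by omega⟩ : BandIdx n)
      (⟨(t, s), by omega, by omega, by omega⟩ : BandIdx n)
      (⟨(t+1, s), htn, by omega, by omega⟩ : BandIdx n) rfl rfl rfl
    rw [e]
    group

lemma comp2 (n : ℕ) :
    (toBand n).comp (toBraid n) = MonoidHom.id (PresentedGroup (bandRels n)) := by
  apply PresentedGroup.ext
  intro p
  obtain ⟨⟨t, s⟩, htn, hst, hs⟩ := p
  show toBand n (toBraid n (PresentedGroup.of _)) = _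
  rw [show toBraid n (PresentedGroup.of ⟨(t,s), htn, hst, hs⟩) = bandImg n ⟨(t,s), htn, hst, hs⟩
    from PresentedGroup.toGroup.of _]
  exact toBand_band hs t hst htn

/-- For `n ≥ 2`, the group `G n` presented on the abstract band
generators `A_{t,s}` (for `n ≥ t > s ≥ 1`) with the band relations is isomorphic to the
braid group `B n`, via an isomorphism sending each `A_{t,s}` to the band generator
`a_{t,s}`. -/
theorem band_presentation_iso (n : ℕ) (hn : 2 ≤ n) :
    ∃ φ : PresentedGroup (bandRels n) ≃* BraidGroup n,
      ∀ p : BandIdx n, φ (PresentedGroup.of p) = band n p.val.1 p.val.2 := by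
  refine ⟨MonoidHom.toMulEquiv (toBraid n) (toBand n) (comp2 n) (comp1 n), fun p => ?_⟩
  show toBraid n (PresentedGroup.of p) = band n p.val.1 p.val.2
  exact PresentedGroup.toGroup.of _
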